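/- Let n ≥ 1 and let A ∈ ℂ^{n×n} be skew-Hermitian. Then the quantity sup{‖exp(Y) − exp(A)‖₂ : Y skew-Hermitian, ‖Y − A‖₂ ≤ ε}/ε tends to 1 as ε → 0⁺; that is, the structured level-1 condition number of the matrix exponential at A in the spectral norm, with perturbations restricted to skew-Hermitian matrices, equals 1. -/

import Mathlib

open Filter Topology Matrix
open scoped Matrix.Norms.L2Operator

/-!
In a C⋆-algebra the exponential of a skew-adjoint element is unitary. Along the path
`t ↦ exp (t • y) * exp ((1 - t) • a)` from `exp a` to `exp y` the derivative
`exp (t • y) * (y - a) * exp ((1 - t) • a)` therefore has norm `‖y - a‖`, so `exp` is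
`1`-Lipschitz on skew-adjoint elements and the supremum is at most `ε`. Conversely the central
perturbation `y = a + (ε i) • 1` gives `exp y - exp a = (e^{ε i} - 1) • exp a`, of norm
`|e^{ε i} - 1| = ε + o(ε)`.
-/

open NormedSpace

theorem hasDerivAt_exp_smul_mul_exp_one_sub_smul {𝔸 : Type*} [NormedRing 𝔸] [NormedAlgebra ℝ 𝔸]
    [CompleteSpace 𝔸] (a b : 𝔸) (t : ℝ) :
    HasDerivAt (fun s : ℝ => exp (s • a) * exp ((1 - s) • b))
      (exp (t • a) * (a - b) * exp ((1 - t) • b)) t := by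
  have hb : HasDerivAt (fun s : ℝ => exp ((1 - s) • b)) (-(exp ((1 - t) • b) * b)) t := by
    simpa [Function.comp_def] using
      (hasDerivAt_exp_smul_const b (1 - t)).scomp t ((hasDerivAt_id t).const_sub 1)
  have hcomm : exp ((1 - t) • b) * b = b * exp ((1 - t) • b) :=
    (((Commute.refl b).smul_right (1 - t)).exp_right).symm.eq
  refine ((hasDerivAt_exp_smul_const a t).mul hb).congr_deriv ?_
  rw [hcomm]
  noncomm_ring

theorem exp_add_smul_one {𝔸 : Type*} [NormedRing 𝔸] [NormedAlgebra ℂ 𝔸] [CompleteSpace 𝔸]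
    (a : 𝔸) (z : ℂ) : exp (a + z • 1) = Complex.exp z • exp a := by
  let +nondep : NormedAlgebra ℚ 𝔸 := .restrictScalars ℚ ℂ 𝔸
  rw [exp_add_of_commute ((Commute.one_right a).smul_right z), ← Algebra.algebraMap_eq_smul_one,
    ← algebraMap_exp_comm, Algebra.algebraMap_eq_smul_one, Complex.exp_eq_exp_ℂ, mul_smul_one]

theorem tendsto_norm_exp_ofReal_mul_I_sub_one_div :
    Tendsto (fun t : ℝ => ‖Complex.exp (t * Complex.I) - 1‖ / t) (𝓝[>] 0) (𝓝 1) := by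
  have hderiv : HasDerivAt (fun t : ℝ => Complex.exp (t * Complex.I)) Complex.I 0 := by
    simpa using ((hasDerivAt_id (0 : ℝ)).ofReal_comp.mul_const Complex.I).cexp
  have hslope := (hasDerivAt_iff_tendsto_slope.mp hderiv).norm.mono_left
    (nhdsWithin_mono 0 fun t (ht : 0 < t) => ht.ne')
  rw [Complex.norm_I] at hslope
  refine hslope.congr' (eventually_nhdsWithin_of_forall fun t (ht : 0 < t) => ?_)
  simp [slope_def_module, abs_of_pos ht, div_eq_inv_mul]

section CStarAlgebra

variable {E : Type*} [CStarAlgebra E]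

theorem norm_exp_sub_exp_le_of_mem_skewAdjoint {a b : E} (ha : a ∈ skewAdjoint E) (hb : b ∈ skewAdjoint E) :
    ‖exp a - exp b‖ ≤ ‖a - b‖ := by
  let +nondep : NormedAlgebra ℚ E := .restrictScalars ℚ ℂ E
  have hunitary : ∀ (c : E) (t : ℝ), c ∈ skewAdjoint E → exp (t • c) ∈ unitary E :=
    fun c t hc => exp_mem_unitary_of_mem_skewAdjoint (skewAdjoint.smul_mem t hc)
  have hbound : ∀ t ∈ Set.Icc (0 : ℝ) 1, ‖exp (t • a) * (a - b) * exp ((1 - t) • b)‖ ≤ ‖a - b‖ :=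
    fun t _ => by
      rw [CStarRing.norm_mul_mem_unitary _ (hunitary b _ hb),
        CStarRing.norm_mem_unitary_mul _ (hunitary a t ha)]
  simpa using (convex_Icc (0 : ℝ) 1).norm_image_sub_le_of_norm_hasDerivWithin_le
    (fun t _ => (hasDerivAt_exp_smul_mul_exp_one_sub_smul a b t).hasDerivWithinAt) hbound
    (Set.left_mem_Icc.mpr zero_le_one) (Set.right_mem_Icc.mpr zero_le_one)

noncomputable def skewExpVariation (a : E) (ε : ℝ) : ℝ :=
  sSup {r | ∃ y ∈ skewAdjoint E, ‖y - a‖ ≤ ε ∧ r = ‖exp y - exp a‖}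

variable {a : E} {ε : ℝ}

theorem skewExpVariation_le (ha : a ∈ skewAdjoint E) (hε : 0 ≤ ε) : skewExpVariation a ε ≤ ε :=
  csSup_le ⟨0, a, ha, by simpa using hε, by simp⟩ fun _ ⟨_, hy, hyε, hr⟩ =>
    hr ▸ (norm_exp_sub_exp_le_of_mem_skewAdjoint hy ha).trans hyε

theorem norm_exp_ofReal_mul_I_sub_one_le_skewExpVariation [Nontrivial E]
    (ha : a ∈ skewAdjoint E) (hε : 0 ≤ ε) :
    ‖Complex.exp (ε * Complex.I) - 1‖ ≤ skewExpVariation a ε := by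
  let +nondep : NormedAlgebra ℚ E := .restrictScalars ℚ ℂ E
  have hbdd : BddAbove {r | ∃ y ∈ skewAdjoint E, ‖y - a‖ ≤ ε ∧ r = ‖exp y - exp a‖} :=
    ⟨ε, fun _ ⟨_, hy, hyε, hr⟩ => hr ▸ (norm_exp_sub_exp_le_of_mem_skewAdjoint hy ha).trans hyε⟩
  refine le_csSup hbdd ⟨a + (ε * Complex.I) • 1, ?_, ?_, ?_⟩
  · refine add_mem ha ((IsSelfAdjoint.one E).smul_mem_skewAdjoint ?_)
    simp [skewAdjoint.mem_iff]
  · simp [norm_smul, abs_of_nonneg hε]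
  · rw [exp_add_smul_one]
    nth_rw 2 [← one_smul ℂ (exp a)]
    rw [← sub_smul, norm_smul,
      CStarRing.norm_of_mem_unitary (exp_mem_unitary_of_mem_skewAdjoint ha), mul_one]

theorem tendsto_skewExpVariation_div [Nontrivial E] (ha : a ∈ skewAdjoint E) :
    Tendsto (fun ε => skewExpVariation a ε / ε) (𝓝[>] 0) (𝓝 1) := by
  refine tendsto_of_tendsto_of_tendsto_of_le_of_le' tendsto_norm_exp_ofReal_mul_I_sub_one_div
    tendsto_const_nhds ?_ ?_ <;> filter_upwards [self_mem_nhdsWithin] with ε (hε : 0 < ε)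
  · exact div_le_div_of_nonneg_right (norm_exp_ofReal_mul_I_sub_one_le_skewExpVariation ha hε.le)
      hε.le
  · exact (div_le_one hε).mpr (skewExpVariation_le ha hε.le)

end CStarAlgebra

/-- key step in the proof of Proposition 3.2 of the paper. The structured
level-1 condition number of the matrix exponential at a skew-Hermitian matrix `A`, in the
spectral norm and with skew-Hermitian perturbations, equals `1`. -/
theorem structured_level1_condition_number_exp_skewHermitian
    (n : ℕ) (hn : 1 ≤ n)
    (A : Matrix (Fin n) (Fin n) ℂ) (hA : Aᴴ = -A) :
    Tendsto (fun ε : ℝ =>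
        (sSup {r : ℝ | ∃ Y : Matrix (Fin n) (Fin n) ℂ, Yᴴ = -Y ∧ ‖Y - A‖ ≤ ε ∧
          r = ‖NormedSpace.exp Y - NormedSpace.exp A‖}) / ε)
      (𝓝[>] 0) (𝓝 1) := by
  have : Nonempty (Fin n) := ⟨⟨0, hn⟩⟩
  show Tendsto (fun ε => skewExpVariation A ε / ε) _ _
  exact tendsto_skewExpVariation_div (skewAdjoint.mem_iff.mpr hA)
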